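/- arXiv:1910.11659 — 3 statements merged into one kernel-verified Lean document; each statement's English description precedes it below -/
import Mathlib

section
/- Let γ > 0. There exists t > 0 such that ∫_ℝ cos(p t) · p² / (p⁴ + γ⁴) dp < 0. In other words, the two-point Schwinger function of the Gribov-type gluon propagator is not nonnegative as a function of (Euclidean) time, so it violates the reflection positivity requirement. -/
/-!
The cosine transform of `p ↦ p²/(p⁴+γ⁴)` is the derivative of the sine transform
`F(t) = ∫ sin(pt) · p/(p⁴+γ⁴) dp`. Now `F(0) = 0`, `F(t) → 0` as `t → ∞` by the
Riemann–Lebesgue lemma, and `F'(0) = ∫ p²/(p⁴+γ⁴) dp > 0`. If `F'` were nonnegative on `(0, ∞)`,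
`F` would be monotone on `[0, ∞)` with equal values at `0` and at `∞`, hence constant, so `F'`
would vanish on `(0, ∞)`, contradicting `F'(0) > 0` and the continuity of `F'`.
-/

open Real MeasureTheory Filter Topology Set FourierTransform

theorem exists_pos_lt_zero_of_hasDerivAt_of_tendsto_atTop {F f : ℝ → ℝ}
    (hF : ∀ t, HasDerivAt F (f t) t) (hf : ContinuousAt f 0) (hf0 : 0 < f 0)
    (hFlim : Tendsto F atTop (𝓝 (F 0))) : ∃ t, 0 < t ∧ f t < 0 := by
  by_contra! hnonneg
  have hmono : MonotoneOn F (Ici 0) :=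
    monotoneOn_of_deriv_nonneg (convex_Ici 0)
      (fun t _ => (hF t).continuousAt.continuousWithinAt)
      (fun t _ => (hF t).differentiableAt.differentiableWithinAt)
      (fun t ht => (hF t).deriv ▸ hnonneg t (by simpa using ht))
  have hconst : ∀ t ∈ Ici (0 : ℝ), F t = F 0 := fun t ht =>
    le_antisymm (ge_of_tendsto hFlim (eventually_ge_atTop t |>.mono fun s hs =>
      hmono ht (mem_Ici.2 (ht.trans hs)) hs)) (hmono self_mem_Ici ht ht)
  have hzero : ∀ t, 0 < t → f t = 0 := fun t ht =>
    (hF t).unique ((hasDerivAt_const t (F 0)).congr_of_eventuallyEq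
      (eventually_ge_nhds ht |>.mono fun s hs => hconst s hs))
  have hf_right : Tendsto f (𝓝[>] 0) (𝓝 0) :=
    tendsto_const_nhds.congr' (eventually_nhdsWithin_of_forall fun t ht => (hzero t ht).symm)
  exact hf0.ne' (tendsto_nhds_unique (hf.tendsto.mono_left nhdsWithin_le_nhds) hf_right)

section SineCosineTransform

variable {g : ℝ → ℝ}

theorem continuous_integral_cos_mul (hg : Integrable g) :
    Continuous fun t => ∫ p, cos (p * t) * g p :=
  continuous_of_dominated (fun t => by fun_prop) (fun t => .of_forall fun p => by
      simpa [abs_mul] using mul_le_mul_of_nonneg_right (abs_cos_le_one (p * t)) (abs_nonneg (g p)))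
    hg.norm (.of_forall fun p => by fun_prop)

theorem hasDerivAt_integral_sin_mul (hg : Integrable g) (hpg : Integrable fun p => p * g p)
    (t : ℝ) :
    HasDerivAt (fun t => ∫ p, sin (p * t) * g p) (∫ p, cos (p * t) * (p * g p)) t := by
  refine (hasDerivAt_integral_of_dominated_loc_of_deriv_le
    (F := fun s p => sin (p * s) * g p) (F' := fun s p => cos (p * s) * (p * g p))
    (bound := fun p => ‖p * g p‖)
    univ_mem (.of_forall fun s => by fun_prop) ?_ (by fun_prop) ?_ hpg.norm ?_).2
  · exact hg.norm.mono' (by fun_prop) (.of_forall fun p => by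
      simpa [abs_mul] using mul_le_mul_of_nonneg_right (abs_sin_le_one (p * t)) (abs_nonneg (g p)))
  · exact .of_forall fun p s _ => by
      simpa [abs_mul] using mul_le_mul_of_nonneg_right (abs_cos_le_one (p * s))
        (abs_nonneg (p * g p))
  · refine .of_forall fun p s _ => ?_
    simpa [mul_comm, mul_left_comm, mul_assoc] using
      ((hasDerivAt_id s).const_mul p).sin.mul_const (g p)

theorem integral_sin_mul_eq_neg_im_fourier (hg : Integrable g) (t : ℝ) :
    ∫ p, sin (p * t) * g p = -(∫ p, 𝐞 (-(p * (t / (2 * π)))) • (g p : ℂ)).im := by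
  have hint : Integrable fun p : ℝ => 𝐞 (-(p * (t / (2 * π)))) • (g p : ℂ) :=
    (hg.ofReal (𝕜 := ℂ)).mono (by fun_prop) (.of_forall fun p => by simp)
  rw [← RCLike.im_to_complex, ← integral_im hint, ← integral_neg]
  congr 1 with p
  have harg : 2 * π * -(p * (t / (2 * π))) = -(p * t) := by field_simp
  rw [Circle.smul_def, Real.fourierChar_apply, harg, smul_eq_mul, RCLike.im_to_complex,
    Complex.im_mul_ofReal, Complex.exp_ofReal_mul_I_im, sin_neg, neg_mul, neg_neg]

theorem tendsto_integral_sin_mul_atTop (hg : Integrable g) :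
    Tendsto (fun t => ∫ p, sin (p * t) * g p) atTop (𝓝 0) := by
  have hRL := (Real.tendsto_integral_exp_smul_cocompact fun p => (g p : ℂ)).comp
    ((tendsto_id.atTop_div_const (by positivity : (0 : ℝ) < 2 * π)).mono_right
      atTop_le_cocompact)
  have him := ((Complex.continuous_im.tendsto 0).comp hRL).neg
  rw [Complex.zero_im, neg_zero] at him
  exact him.congr fun t => (integral_sin_mul_eq_neg_im_fourier hg t).symm

theorem exists_pos_integral_cos_mul_lt_zero (hg : Integrable g)
    (hpg : Integrable fun p => p * g p) (hpos : 0 < ∫ p, p * g p) :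
    ∃ t, 0 < t ∧ ∫ p, cos (p * t) * (p * g p) < 0 :=
  exists_pos_lt_zero_of_hasDerivAt_of_tendsto_atTop (hasDerivAt_integral_sin_mul hg hpg)
    (continuous_integral_cos_mul hpg).continuousAt (by simpa using hpos)
    (by simpa using tendsto_integral_sin_mul_atTop hg)

end SineCosineTransform

section QuarticDenominator

variable {c : ℝ}

theorem integrable_one_add_sq_div_pow_four_add (hc : 0 < c) :
    Integrable fun p : ℝ => (1 + p ^ 2) / (p ^ 4 + c) := by
  refine (integrable_inv_one_add_sq.const_mul (2 * (1 + c⁻¹))).mono'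
    (by fun_prop : Measurable _).aestronglyMeasurable (.of_forall fun p => ?_)
  rw [Real.norm_of_nonneg (by positivity), ← div_eq_mul_inv,
    div_le_div_iff₀ (by positivity) (by positivity)]
  have : c * c⁻¹ = 1 := mul_inv_cancel₀ hc.ne'
  nlinarith [sq_nonneg (p ^ 2 - 1), mul_nonneg (pow_nonneg (sq_nonneg p) 2) (inv_pos.2 hc).le]

theorem integrable_div_pow_four_add (hc : 0 < c) :
    Integrable fun p : ℝ => p / (p ^ 4 + c) :=
  (integrable_one_add_sq_div_pow_four_add hc).mono'
    (by fun_prop : Measurable _).aestronglyMeasurable (.of_forall fun p => by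
      rw [norm_div, Real.norm_of_nonneg (by positivity : 0 ≤ p ^ 4 + c), Real.norm_eq_abs]
      gcongr
      nlinarith [sq_nonneg (|p| - 1), sq_abs p])

theorem integrable_sq_div_pow_four_add (hc : 0 < c) :
    Integrable fun p : ℝ => p ^ 2 / (p ^ 4 + c) :=
  (integrable_one_add_sq_div_pow_four_add hc).mono'
    (by fun_prop : Measurable _).aestronglyMeasurable (.of_forall fun p => by
      rw [Real.norm_of_nonneg (by positivity)]
      gcongr
      linarith)

theorem integral_sq_div_pow_four_add_pos (hc : 0 < c) :
    0 < ∫ p : ℝ, p ^ 2 / (p ^ 4 + c) := by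
  refine (integral_pos_iff_support_of_nonneg (fun p => by positivity)
    (integrable_sq_div_pow_four_add hc)).2 ?_
  have hsupp : Ioi (0 : ℝ) ⊆ Function.support fun p : ℝ => p ^ 2 / (p ^ 4 + c) := fun p hp =>
    (div_pos (pow_pos hp 2) (by positivity)).ne'
  exact (measure_mono hsupp).trans_lt' (by simp)

end QuarticDenominator

/-- The two-point Schwinger function of the Gribov-type gluon propagator is
negative for some positive Euclidean time, violating reflection positivity. -/
theorem gribov_schwinger_reflection_positivity_violation (γ : ℝ) (hγ : 0 < γ) :
    ∃ t : ℝ, 0 < t ∧ ∫ p : ℝ, Real.cos (p * t) * p ^ 2 / (p ^ 4 + γ ^ 4) < 0 := by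
  have hc : 0 < γ ^ 4 := by positivity
  have hsq : (fun p : ℝ => p * (p / (p ^ 4 + γ ^ 4))) = fun p => p ^ 2 / (p ^ 4 + γ ^ 4) := by
    ext p
    ring
  obtain ⟨t, ht, hneg⟩ := exists_pos_integral_cos_mul_lt_zero (integrable_div_pow_four_add hc)
    (hsq ▸ integrable_sq_div_pow_four_add hc) (hsq ▸ integral_sq_div_pow_four_add_pos hc)
  refine ⟨t, ht, ?_⟩
  convert hneg using 3 with p
  ring
end

section
/- Let λ > 0 and define φ : ℝ⁴ \ {0} → ℝ by φ(x) = (λ ‖x‖²)^{−1/2}, where ‖x‖² = ∑_{i=0}^{3} x_i². Then φ is smooth on ℝ⁴ \ {0} and satisfies the nonlinear equation Δφ(x) + λ φ(x)³ = 0 at every x ≠ 0, where Δφ = ∑_{i=0}^{3} ∂²φ/∂x_i² is the Euclidean Laplacian. (This is the scalar field underlying the de Alfaro–Fubini–Furlan one-meron solution A^a_μ = η^a_{μν} x_ν / x² via the φ⁴-ansatz.) -/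
open BigOperators

namespace MeronAux

noncomputable section

abbrev E4 := Fin 4 → ℝ

def q (x : E4) : ℝ := ∑ i, x i ^ 2

lemma q_pos {x : E4} (hx : x ≠ 0) : 0 < q x := by
  have h : ∃ i, x i ≠ 0 := by
    by_contra h; push_neg at h; exact hx (funext h)
  obtain ⟨i, hi⟩ := h
  exact Finset.sum_pos' (fun j _ => sq_nonneg _) ⟨i, Finset.mem_univ i, by positivity⟩

def P (x : E4) : E4 →L[ℝ] ℝ := ∑ j, (2 * x j) • ContinuousLinearMap.proj j

lemma P_apply (x v : E4) : P x v = ∑ j, 2 * x j * v j := by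
  simp [P, ContinuousLinearMap.sum_apply, smul_eq_mul]

lemma P_single (x : E4) (i : Fin 4) : P x (Pi.single i 1) = 2 * x i := by
  rw [P_apply, Finset.sum_eq_single i]
  · simp
  · intro j _ hj; simp [Pi.single_eq_of_ne hj]
  · simp

lemma hasFDerivAt_q (x : E4) : HasFDerivAt q (P x) x := by
  have : HasFDerivAt (fun y : E4 => ∑ j, y j ^ 2)
      (∑ j : Fin 4, (2 * x j) • (ContinuousLinearMap.proj j : E4 →L[ℝ] ℝ)) x := by
    apply HasFDerivAt.fun_sum
    intro j _
    have h1 : HasFDerivAt (fun y : E4 => y j)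
        (ContinuousLinearMap.proj j : E4 →L[ℝ] ℝ) x :=
      (ContinuousLinearMap.proj j : E4 →L[ℝ] ℝ).hasFDerivAt
    simpa [sq, two_mul, add_smul] using h1.fun_mul h1
  exact this

lemma hasFDerivAt_rpow_q (c : ℝ) (p : ℝ) {x : E4} (hx : 0 < c * q x) :
    HasFDerivAt (fun y => (c * q y) ^ p) ((p * (c * q x) ^ (p - 1) * c) • P x) x := by
  have h1 : HasFDerivAt (fun y : E4 => c * q y) (c • P x) x :=
    (hasFDerivAt_q x).const_mul c
  have h2 : HasDerivAt (fun t : ℝ => t ^ p) (p * (c * q x) ^ (p - 1)) (c * q x) :=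
    Real.hasDerivAt_rpow_const (Or.inl hx.ne')
  have h3 := h2.comp_hasFDerivAt x h1
  rw [smul_smul] at h3
  exact h3

/-- First derivative of `(c*q)^(-1/2)` written as an explicit sum of projections. -/
def g (c : ℝ) (y : E4) : E4 →L[ℝ] ℝ :=
  ∑ i, (-c * (y i * (c * q y) ^ (-(3/2) : ℝ))) • ContinuousLinearMap.proj i

lemma hasFDerivAt_phi (c : ℝ) {y : E4} (hy : 0 < c * q y) :
    HasFDerivAt (fun z => (c * q z) ^ (-(1/2) : ℝ)) (g c y) y := by
  have h := hasFDerivAt_rpow_q c (-(1/2)) hy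
  convert h using 1
  have : (-(1/2) : ℝ) - 1 = -(3/2) := by norm_num
  rw [this]
  unfold g P
  rw [Finset.smul_sum]
  refine Finset.sum_congr rfl fun i _ => ?_
  rw [smul_smul]
  ring_nf

lemma hasFDerivAt_psi (c : ℝ) (i : Fin 4) {x : E4} (hx : 0 < c * q x) :
    HasFDerivAt (fun y => -c * (y i * (c * q y) ^ (-(3/2) : ℝ)))
      ((-c) • ((x i) • ((-(3/2) * (c * q x) ^ (-(5/2) : ℝ) * c) • P x)
        + ((c * q x) ^ (-(3/2) : ℝ)) • (ContinuousLinearMap.proj i : E4 →L[ℝ] ℝ))) x := by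
  have h1 : HasFDerivAt (fun y : E4 => y i)
      (ContinuousLinearMap.proj i : E4 →L[ℝ] ℝ) x :=
    (ContinuousLinearMap.proj i : E4 →L[ℝ] ℝ).hasFDerivAt
  have h2 := hasFDerivAt_rpow_q c (-(3/2)) hx
  have h3 := h1.fun_mul h2
  have h4 := h3.const_mul (-c)
  have : (-(3/2) : ℝ) - 1 = -(5/2) := by norm_num
  rw [this] at h4
  exact h4

lemma continuous_q : Continuous q :=
  continuous_finset_sum _ fun i _ => (continuous_apply i).pow 2

lemma contDiff_q {n : WithTop ℕ∞} : ContDiff ℝ n q :=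
  ContDiff.sum fun i _ => ((ContinuousLinearMap.proj i : E4 →L[ℝ] ℝ).contDiff).pow 2

lemma fderiv_g_apply (c : ℝ) {x : E4} (hx : 0 < c * q x) (i : Fin 4) :
    fderiv ℝ (g c) x (Pi.single i 1) (Pi.single i 1)
      = 3 * c ^ 2 * x i ^ 2 * (c * q x) ^ (-(5/2) : ℝ) - c * (c * q x) ^ (-(3/2) : ℝ) := by
  have hG : HasFDerivAt (g c)
      (∑ j : Fin 4, ((-c) • ((x j) • ((-(3/2) * (c * q x) ^ (-(5/2) : ℝ) * c) • P x)
          + ((c * q x) ^ (-(3/2) : ℝ)) • (ContinuousLinearMap.proj j : E4 →L[ℝ] ℝ))).smulRight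
            (ContinuousLinearMap.proj j)) x := by
    unfold g
    exact HasFDerivAt.fun_sum fun j _ => (hasFDerivAt_psi c j hx).smul_const (ContinuousLinearMap.proj j : E4 →L[ℝ] ℝ)
  rw [hG.fderiv, ContinuousLinearMap.sum_apply, ContinuousLinearMap.sum_apply,
    Finset.sum_eq_single i]
  · simp only [ContinuousLinearMap.smulRight_apply, ContinuousLinearMap.smul_apply,
      ContinuousLinearMap.add_apply, ContinuousLinearMap.proj_apply, P_single,
      Pi.single_eq_same, smul_eq_mul]
    ring
  · intro j _ hj
    simp [ContinuousLinearMap.smulRight_apply, ContinuousLinearMap.proj_apply,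
      Pi.single_eq_of_ne hj]
  · simp

lemma second_deriv (c : ℝ) {x : E4} (hx : 0 < c * q x) (i : Fin 4) :
    fderiv ℝ (fderiv ℝ (fun y => (c * q y) ^ (-(1/2) : ℝ))) x
        (Pi.single i 1) (Pi.single i 1)
      = 3 * c ^ 2 * x i ^ 2 * (c * q x) ^ (-(5/2) : ℝ) - c * (c * q x) ^ (-(3/2) : ℝ) := by
  have hUopen : IsOpen {y : E4 | 0 < c * q y} :=
    isOpen_lt continuous_const (continuous_const.mul continuous_q)
  have hev : fderiv ℝ (fun y => (c * q y) ^ (-(1/2) : ℝ)) =ᶠ[nhds x] g c := by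
    filter_upwards [hUopen.mem_nhds hx] with y hy
    exact (hasFDerivAt_phi c hy).fderiv
  rw [hev.fderiv_eq, fderiv_g_apply c hx i]

end

end MeronAux

open MeronAux in
/-- The scalar field `φ(x) = (λ‖x‖²)^{−1/2}` underlying the de Alfaro–Fubini–
Furlan one-meron solution is smooth away from the origin and satisfies the
massless φ⁴ equation `Δφ + λφ³ = 0` there. -/
theorem meron_phi4_solution (lam : ℝ) (hlam : 0 < lam) :
    let φ : (Fin 4 → ℝ) → ℝ := fun x => (Real.sqrt (lam * ∑ i, x i ^ 2))⁻¹
    ContDiffOn ℝ (⊤ : ℕ∞) φ {x : Fin 4 → ℝ | x ≠ 0} ∧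
    ∀ x : Fin 4 → ℝ, x ≠ 0 →
      (∑ i : Fin 4,
          iteratedFDeriv ℝ 2 φ x ![Pi.single i 1, Pi.single i 1])
        + lam * φ x ^ 3 = 0 := by
  intro φ
  have hUopen : IsOpen {y : Fin 4 → ℝ | 0 < lam * q y} :=
    isOpen_lt continuous_const (continuous_const.mul continuous_q)
  constructor
  · intro x hx
    have hpos : 0 < lam * q x := mul_pos hlam (q_pos hx)
    have hsqrt : Real.sqrt (lam * q x) ≠ 0 := (Real.sqrt_pos.mpr hpos).ne'
    refine ContDiffAt.contDiffWithinAt ?_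
    have h1 : ContDiffAt ℝ (⊤ : ℕ∞) (fun y : Fin 4 → ℝ => lam * q y) x :=
      (contDiff_const.mul contDiff_q).contDiffAt
    exact ((Real.contDiffAt_sqrt hpos.ne').comp x h1).inv hsqrt
  · intro x hx
    have hpos : 0 < lam * q x := mul_pos hlam (q_pos hx)
    have hφeq : φ =ᶠ[nhds x] fun y => (lam * q y) ^ (-(1/2) : ℝ) := by
      filter_upwards [hUopen.mem_nhds hpos] with y hy
      show (Real.sqrt (lam * q y))⁻¹ = _
      rw [Real.sqrt_eq_rpow]
      exact (Real.rpow_neg hy.le _).symm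
    have hiter : ∀ i : Fin 4, iteratedFDeriv ℝ 2 φ x ![Pi.single i 1, Pi.single i 1]
        = 3 * lam ^ 2 * x i ^ 2 * (lam * q x) ^ (-(5/2) : ℝ)
          - lam * (lam * q x) ^ (-(3/2) : ℝ) := by
      intro i
      rw [iteratedFDeriv_two_apply]
      simp only [Matrix.cons_val_zero, Matrix.cons_val_one, Matrix.head_cons]
      rw [hφeq.fderiv.fderiv_eq]
      exact second_deriv lam hpos i
    rw [Finset.sum_congr rfl fun i _ => hiter i]
    have hcube : φ x ^ 3 = (lam * q x) ^ (-(3/2) : ℝ) := by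
      show ((Real.sqrt (lam * q x))⁻¹) ^ 3 = _
      rw [Real.sqrt_eq_rpow, ← Real.rpow_neg hpos.le,
        ← Real.rpow_natCast ((lam * q x) ^ (-(1/2) : ℝ)) 3, ← Real.rpow_mul hpos.le]
      norm_num
    rw [hcube]
    have key : (lam * q x) ^ (-(5/2) : ℝ) * (lam * q x) = (lam * q x) ^ (-(3/2) : ℝ) := by
      rw [← Real.rpow_add_one hpos.ne' (-(5/2))]
      norm_num
    rw [Finset.sum_sub_distrib, Finset.sum_const, Finset.card_univ]
    have hsum : ∑ i : Fin 4, 3 * lam ^ 2 * x i ^ 2 * (lam * q x) ^ (-(5/2) : ℝ)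
        = 3 * lam ^ 2 * (lam * q x) ^ (-(5/2) : ℝ) * q x := by
      simp only [q, Finset.mul_sum]
      exact Finset.sum_congr rfl fun i _ => by ring
    rw [hsum]
    simp only [Fintype.card_fin, nsmul_eq_mul, Nat.cast_ofNat]
    linear_combination (3 * lam) * key
end

section
/- Let λ > 0 and ρ ≠ 0 be real numbers, and define φ : ℝ⁴ → ℝ by φ(x) = √(8/λ) · ρ/(‖x‖² + ρ²), where ‖x‖² = ∑_{i=0}^{3} x_i². Then φ is smooth on ℝ⁴ and satisfies the nonlinear equation Δφ(x) + λ φ(x)³ = 0 at every x ∈ ℝ⁴, where Δφ = ∑_{i=0}^{3} ∂²φ/∂x_i² is the Euclidean Laplacian. (This is the scalar field underlying the BPST instanton solution A^a_μ = 2η^a_{μν} x_ν/(x² + ρ²) via the φ⁴-ansatz.) -/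
open BigOperators

lemma instanton_aux (c b : ℝ) (hb : 0 < b) :
    ContDiff ℝ (⊤ : ℕ∞) (fun x : Fin 4 → ℝ => c * ((∑ i, x i ^ 2) + b)⁻¹) ∧
    ∀ x : Fin 4 → ℝ,
      ∑ i : Fin 4, iteratedFDeriv ℝ 2 (fun x : Fin 4 → ℝ => c * ((∑ i, x i ^ 2) + b)⁻¹) x
          ![Pi.single i 1, Pi.single i 1]
        = -8 * c * b / ((∑ i, x i ^ 2) + b) ^ 3 := by
  set f : (Fin 4 → ℝ) → ℝ := fun x => c * ((∑ i, x i ^ 2) + b)⁻¹ with hfdef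
  set D : (Fin 4 → ℝ) → ℝ := fun x => (∑ i, x i ^ 2) + b with hDdef
  have hDpos : ∀ x, 0 < D x := fun x =>
    add_pos_of_nonneg_of_pos (Finset.sum_nonneg fun i _ => sq_nonneg _) hb
  have hDne : ∀ x, D x ≠ 0 := fun x => (hDpos x).ne'
  have hDcd : ContDiff ℝ (⊤ : ℕ∞) D :=
    (ContDiff.sum fun i _ =>
      ((ContinuousLinearMap.proj i : (Fin 4 → ℝ) →L[ℝ] ℝ).contDiff).pow 2).add contDiff_const
  have hfcd : ContDiff ℝ (⊤ : ℕ∞) f := contDiff_const.mul (hDcd.inv hDne)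
  set L : (Fin 4 → ℝ) → (Fin 4 → ℝ) →L[ℝ] ℝ :=
    fun y => ∑ j, ((2:ℝ) * y j) • (ContinuousLinearMap.proj j : (Fin 4 → ℝ) →L[ℝ] ℝ) with hLdef
  have hL : ∀ y, HasFDerivAt D (L y) y := by
    intro y
    have h : ∀ j : Fin 4, HasFDerivAt (fun x : Fin 4 → ℝ => x j ^ 2)
        (((2:ℝ) * y j) • (ContinuousLinearMap.proj j : (Fin 4 → ℝ) →L[ℝ] ℝ)) y := by
      intro j
      have := (hasDerivAt_pow 2 (y j)).comp_hasFDerivAt (𝕜 := ℝ) y (hasFDerivAt_apply (𝕜 := ℝ) j y)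
      simpa [Function.comp_def] using this
    exact (HasFDerivAt.fun_sum (fun j _ => h j)).add_const b
  have hLval : ∀ y (i : Fin 4), L y (Pi.single i 1) = 2 * y i := by
    intro y i
    simp [hLdef, Pi.single_apply]
  have hf' : ∀ y, HasFDerivAt f (-((c * (D y ^ 2)⁻¹) • L y)) y := by
    intro y
    have hg : HasDerivAt (fun t : ℝ => c * t⁻¹) (c * -(D y ^ 2)⁻¹) (D y) :=
      (hasDerivAt_inv (hDne y)).const_mul c
    simpa [Function.comp_def] using hg.comp_hasFDerivAt (𝕜 := ℝ) y (hL y)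
  have hψ : ∀ (i : Fin 4) y, fderiv ℝ f y (Pi.single i 1) = -2 * c * y i / D y ^ 2 := by
    intro i y
    rw [(hf' y).fderiv]
    simp [hLval]
    ring
  -- second derivative along coordinate i
  have hsec : ∀ (i : Fin 4) (x : Fin 4 → ℝ),
      fderiv ℝ (fun y => fderiv ℝ f y (Pi.single i 1)) x (Pi.single i 1)
        = -2 * c / D x ^ 2 + 8 * c * x i ^ 2 / D x ^ 3 := by
    intro i x
    have hrw : (fun y => fderiv ℝ f y (Pi.single i 1))
        = fun y => (-2 * c * y i) * (D y ^ 2)⁻¹ := by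
      funext y; rw [hψ i y]; ring
    rw [hrw]
    have h1 : HasFDerivAt (fun y : Fin 4 → ℝ => -2 * c * y i)
        ((-2 * c) • (ContinuousLinearMap.proj i : (Fin 4 → ℝ) →L[ℝ] ℝ)) x :=
      (hasFDerivAt_apply i x).const_mul (-2 * c)
    have h2 : HasDerivAt (fun t : ℝ => (t ^ 2)⁻¹)
        (-(2 * D x ^ 1) / (D x ^ 2) ^ 2) (D x) := by
      have := (hasDerivAt_pow 2 (D x)).inv (pow_ne_zero 2 (hDne x))
      exact this.congr_deriv (by norm_num)
    have h3 : HasFDerivAt (fun y : Fin 4 → ℝ => (D y ^ 2)⁻¹)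
        ((-(2 * D x ^ 1) / (D x ^ 2) ^ 2) • L x) x := by
      simpa [Function.comp_def] using h2.comp_hasFDerivAt (𝕜 := ℝ) x (hL x)
    have hmul := h1.mul h3
    rw [show (fun y : Fin 4 → ℝ => -2 * c * y i * (D y ^ 2)⁻¹) = (fun y => -2 * c * y i) * (fun y => (D y ^ 2)⁻¹) from rfl, hmul.fderiv]
    simp [hLval]
    have hx := hDne x
    field_simp
    ring
  have hderivdiff : Differentiable ℝ (fderiv ℝ f) :=
    (hfcd.fderiv_right (m := 1) (WithTop.coe_le_coe.mpr le_top)).differentiable one_ne_zero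
  have key : ∀ (v : Fin 4 → ℝ) (x : Fin 4 → ℝ),
      fderiv ℝ (fderiv ℝ f) x v v = fderiv ℝ (fun y => fderiv ℝ f y v) x v := by
    intro v x
    have h := ((hderivdiff x).hasFDerivAt.clm_apply (hasFDerivAt_const v x)).fderiv
    rw [h]
    simp
  refine ⟨hfcd, fun x => ?_⟩
  have hkey : ∀ i : Fin 4, iteratedFDeriv ℝ 2 f x ![Pi.single i 1, Pi.single i 1]
      = -2 * c / D x ^ 2 + 8 * c * x i ^ 2 / D x ^ 3 := by
    intro i
    rw [iteratedFDeriv_two_apply]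
    have h0 : (![Pi.single i 1, Pi.single i 1] : Fin 2 → Fin 4 → ℝ) 0 = Pi.single i 1 := rfl
    have h1 : (![Pi.single i 1, Pi.single i 1] : Fin 2 → Fin 4 → ℝ) 1 = Pi.single i 1 := rfl
    rw [h0, h1, key, hsec]
  rw [Finset.sum_congr rfl (fun i _ => hkey i)]
  rw [Finset.sum_add_distrib, Finset.sum_const]
  have hQ : ∑ i : Fin 4, 8 * c * x i ^ 2 / D x ^ 3
      = 8 * c * (D x - b) / D x ^ 3 := by
    rw [← Finset.sum_div, ← Finset.mul_sum]
    congr 2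
    simp [hDdef]
  rw [hQ]
  have hx := hDne x
  show (4 : ℕ) • (-2 * c / D x ^ 2) + 8 * c * (D x - b) / D x ^ 3 = -8 * c * b / D x ^ 3
  simp only [nsmul_eq_mul, Nat.cast_ofNat]
  field_simp
  ring

/-- The scalar field `φ(x) = √(8/λ) ρ/(‖x‖² + ρ²)` underlying the BPST
instanton solution is smooth on all of ℝ⁴ and satisfies the massless φ⁴
equation `Δφ + λφ³ = 0` everywhere. -/
theorem instanton_phi4_solution (lam ρ : ℝ) (hlam : 0 < lam) (hρ : ρ ≠ 0) :
    let φ : (Fin 4 → ℝ) → ℝ := fun x =>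
      Real.sqrt (8 / lam) * ρ / ((∑ i, x i ^ 2) + ρ ^ 2)
    ContDiff ℝ (⊤ : ℕ∞) φ ∧
    ∀ x : Fin 4 → ℝ,
      (∑ i : Fin 4,
          iteratedFDeriv ℝ 2 φ x ![Pi.single i 1, Pi.single i 1])
        + lam * φ x ^ 3 = 0 := by
  intro φ
  have hb : (0:ℝ) < ρ ^ 2 := pow_two_pos_of_ne_zero hρ
  set c : ℝ := Real.sqrt (8 / lam) * ρ with hc
  have hφeq : φ = fun x : Fin 4 → ℝ => c * ((∑ i, x i ^ 2) + ρ ^ 2)⁻¹ := by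
    funext x
    simp [φ, hc, div_eq_mul_inv]
  obtain ⟨hsmooth, hlap⟩ := instanton_aux c (ρ ^ 2) hb
  rw [hφeq]
  refine ⟨hsmooth, fun x => ?_⟩
  rw [hlap x]
  have hD : (0:ℝ) < (∑ i, x i ^ 2) + ρ ^ 2 :=
    add_pos_of_nonneg_of_pos (Finset.sum_nonneg fun i _ => sq_nonneg _) hb
  have hcc : lam * c ^ 3 = 8 * c * ρ ^ 2 := by
    have h8 : (0:ℝ) ≤ 8 / lam := by positivity
    have hs : Real.sqrt (8 / lam) ^ 2 = 8 / lam := Real.sq_sqrt h8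
    have hc2 : c ^ 2 = 8 / lam * ρ ^ 2 := by rw [hc, mul_pow, hs]
    have h3 : lam * c ^ 3 = lam * (c ^ 2 * c) := by ring
    rw [h3, hc2]
    field_simp
  have hDne := hD.ne'
  field_simp
  nlinarith [hcc, pow_pos hD 3]
end
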